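/- Let g : [0,1] → ℝ be ACG* with D₊g(t) = h(t) for almost every t, where h is HK-integrable. If f : [0,1] → ℝ is ACG and D₊f(t) ≤ D₊g(t) with D₊g(t) finite for almost all t ∈ [0,1], then f(1) − f(0) ≤ g(1) − g(0). -/

import Mathlib

open Filter Set Topology MeasureTheory

/-- Lower right Dini derivative of a real-valued function. -/
noncomputable def DlowR (φ : ℝ → ℝ) (t : ℝ) : EReal :=
  Filter.liminf (fun s : ℝ => (((φ (t + s) - φ t) / s : ℝ) : EReal))
    (nhdsWithin 0 (Set.Ioi 0))

/-- Oscillation of `φ` on the interval `[c,d]`. -/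
noncomputable def osc (φ : ℝ → ℝ) (c d : ℝ) : ℝ :=
  sSup {r | ∃ x y : ℝ, c ≤ x ∧ x ≤ y ∧ y ≤ d ∧ r = |φ y - φ x|}

/-- A finite family of intervals `[c i, d i]` is non-overlapping with endpoints in `S`. -/
def GoodIntervals (S : Set ℝ) {n : ℕ} (c d : Fin n → ℝ) : Prop :=
  (∀ i, c i ∈ S ∧ d i ∈ S ∧ c i ≤ d i) ∧
    Pairwise fun i j => d i ≤ c j ∨ d j ≤ c i

/-- `φ` is absolutely continuous (AC) on `S`. -/
def FnAC (φ : ℝ → ℝ) (S : Set ℝ) : Prop :=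
  ∀ ε > 0, ∃ δ > 0, ∀ (n : ℕ) (c d : Fin n → ℝ),
    GoodIntervals S c d → (∑ i, (d i - c i)) < δ →
      (∑ i, |φ (d i) - φ (c i)|) < ε

/-- `φ` is absolutely continuous in the restricted sense (AC*) on `S`. -/
def FnACstar (φ : ℝ → ℝ) (S : Set ℝ) : Prop :=
  ∀ ε > 0, ∃ δ > 0, ∀ (n : ℕ) (c d : Fin n → ℝ),
    GoodIntervals S c d → (∑ i, (d i - c i)) < δ →
      (∑ i, osc φ (c i) (d i)) < ε

/-- `φ` is generalized absolutely continuous (ACG) on `[a,b]`. -/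
def FnACG (φ : ℝ → ℝ) (a b : ℝ) : Prop :=
  ContinuousOn φ (Set.Icc a b) ∧
    ∃ S : ℕ → Set ℝ, (⋃ n, S n) = Set.Icc a b ∧ ∀ n, FnAC φ (S n)

/-- `φ` is generalized absolutely continuous in the restricted sense (ACG*) on `[a,b]`. -/
def FnACGstar (φ : ℝ → ℝ) (a b : ℝ) : Prop :=
  ContinuousOn φ (Set.Icc a b) ∧
    ∃ S : ℕ → Set ℝ, (⋃ n, S n) = Set.Icc a b ∧ ∀ n, FnACstar φ (S n)

/-- `f` has Henstock–Kurzweil integral `I` on `[a,b]`. -/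
def HasHKIntegral (f : ℝ → ℝ) (a b I : ℝ) : Prop :=
  ∀ ε > 0, ∃ δ : ℝ → ℝ, (∀ t ∈ Set.Icc a b, 0 < δ t) ∧
    ∀ (n : ℕ) (x : Fin (n + 1) → ℝ) (t : Fin n → ℝ),
      Monotone x → x 0 = a → x (Fin.last n) = b →
      (∀ i : Fin n, t i ∈ Set.Icc (x i.castSucc) (x i.succ)) →
      (∀ i : Fin n, x i.succ - x i.castSucc < δ (t i)) →
      |(∑ i : Fin n, f (t i) * (x i.succ - x i.castSucc)) - I| < ε

/-!
Put `φ = f - g`. Both `f` and `g` are ACG (AC* implies AC for a continuous function), hence so is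
`φ`, and `D₊φ ≤ D₊f - D₊g ≤ 0` wherever `D₊g` is finite, that is, almost everywhere. It remains
to see that an ACG function `φ` with `D₊φ ≤ 0` off a null set `E` is nonincreasing. For `ε > 0`
the function `ψ t = φ t - ε t` is ACG, so it maps the null set `E` to a null set (Lusin's
condition (N), proved on each AC piece by covering `E` by an open set of small measure and
estimating the oscillation of `ψ` on each of its components). If `ψ a < ψ b`, the last point at
which `ψ` takes a value `c ∈ (ψ a, ψ b)` has `D₊φ ≥ ε`, so it lies in `E`; thus `(ψ a, ψ b) ⊆ ψ(E)`
would be null, which is absurd.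
-/

open scoped ENNReal NNReal

lemma le_dlowR_of_eventually {φ : ℝ → ℝ} {t m : ℝ}
    (h : ∀ᶠ s in 𝓝[>] 0, m ≤ (φ (t + s) - φ t) / s) : (m : EReal) ≤ DlowR φ t :=
  le_liminf_of_le (by isBoundedDefault) (h.mono fun _ hs => EReal.coe_le_coe_iff.2 hs)

lemma dlowR_sub_add_le (f g : ℝ → ℝ) (t : ℝ) :
    DlowR (fun u => f u - g u) t + DlowR g t ≤ DlowR f t := by
  refine EReal.le_liminf_add.trans (le_of_eq (liminf_congr (Eventually.of_forall fun s => ?_)))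
  simp only [Pi.add_apply, ← EReal.coe_add]
  congr 1
  ring

lemma dlowR_sub_nonpos {f g : ℝ → ℝ} {t : ℝ} (htop : DlowR g t ≠ ⊤) (hbot : DlowR g t ≠ ⊥)
    (hfg : DlowR f t ≤ DlowR g t) : DlowR (fun u => f u - g u) t ≤ 0 := by
  have hsum := (dlowR_sub_add_le f g t).trans hfg
  rw [← EReal.coe_toReal htop hbot] at hsum
  rwa [← (EReal.addLECancellable_coe _).add_le_add_iff_right, zero_add]

lemma abs_sub_le_osc {φ : ℝ → ℝ} {c d : ℝ} (hcd : c ≤ d) (hφ : ContinuousOn φ (Icc c d)) :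
    |φ d - φ c| ≤ osc φ c d := by
  obtain ⟨M, hM⟩ := isCompact_Icc.exists_bound_of_continuousOn hφ
  refine le_csSup ⟨M + M, ?_⟩ ⟨c, d, le_rfl, hcd, le_rfl, rfl⟩
  rintro r ⟨x, y, hcx, hxy, hyd, rfl⟩
  have hx := hM x ⟨hcx, hxy.trans hyd⟩
  have hy := hM y ⟨hcx.trans hxy, hyd⟩
  rw [Real.norm_eq_abs] at hx hy
  exact (abs_sub _ _).trans (add_le_add hy hx)

lemma ENNReal.finsetSum_iSup_le {α κ : Type*} {s : Finset α} {F : α → κ → ℝ≥0∞} {c : ℝ≥0∞}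
    (h : ∀ g : α → κ, ∑ a ∈ s, F a (g a) ≤ c) : ∑ a ∈ s, ⨆ k, F a k ≤ c := by
  classical
  rcases isEmpty_or_nonempty κ with _ | _
  · simp
  have hpi : ∀ a, ⨆ k, F a k = ⨆ g : α → κ, F a (g a) := fun a =>
    ((Function.surjective_eval (β := fun _ : α => κ) a).iSup_comp (F a)).symm
  simp_rw [hpi]
  rw [ENNReal.finsetSum_iSup fun g g' => ?_]
  · exact iSup_le h
  -- choice functions are directed: keep, in each coordinate, the better of the two choices
  refine ⟨fun a => if F a (g a) ≤ F a (g' a) then g' a else g a, fun a => ?_⟩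
  dsimp only
  split_ifs with hle
  · exact ⟨hle, le_rfl⟩
  · exact ⟨le_rfl, (not_le.1 hle).le⟩

lemma ofReal_sum_sub_le_volume {ι : Type*} {s : Finset ι} {c d : ι → ℝ} {U : Set ℝ}
    (hcd : ∀ i ∈ s, c i ≤ d i) (hdisj : (s : Set ι).PairwiseDisjoint fun i => Icc (c i) (d i))
    (hU : ∀ i ∈ s, Icc (c i) (d i) ⊆ U) :
    ENNReal.ofReal (∑ i ∈ s, (d i - c i)) ≤ volume U := by
  rw [ENNReal.ofReal_sum_of_nonneg fun i hi => sub_nonneg.2 (hcd i hi)]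
  simp only [← Real.volume_Icc]
  rw [← measure_biUnion_finset hdisj fun _ _ => measurableSet_Icc]
  exact measure_mono (iUnion₂_subset hU)

namespace FnAC

variable {φ ψ : ℝ → ℝ} {S T : Set ℝ}

lemma mono (hφ : FnAC φ S) (hTS : T ⊆ S) : FnAC φ T := by
  intro ε hε
  obtain ⟨δ, hδ, hAC⟩ := hφ ε hε
  exact ⟨δ, hδ, fun n c d hcd => hAC n c d
    ⟨fun i => ⟨hTS (hcd.1 i).1, hTS (hcd.1 i).2.1, (hcd.1 i).2.2⟩, hcd.2⟩⟩

lemma sub (hφ : FnAC φ S) (hψ : FnAC ψ S) : FnAC (fun t => φ t - ψ t) S := by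
  intro ε hε
  obtain ⟨δφ, hδφ, hφ⟩ := hφ (ε / 2) (half_pos hε)
  obtain ⟨δψ, hδψ, hψ⟩ := hψ (ε / 2) (half_pos hε)
  refine ⟨min δφ δψ, lt_min hδφ hδψ, fun n c d hcd hlen => ?_⟩
  calc ∑ i, |(φ (d i) - ψ (d i)) - (φ (c i) - ψ (c i))|
      ≤ ∑ i, (|φ (d i) - φ (c i)| + |ψ (d i) - ψ (c i)|) :=
        Finset.sum_le_sum fun i _ => by
          rw [show (φ (d i) - ψ (d i)) - (φ (c i) - ψ (c i))
            = (φ (d i) - φ (c i)) - (ψ (d i) - ψ (c i)) by ring]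
          exact abs_sub _ _
    _ < ε / 2 + ε / 2 := by
        rw [Finset.sum_add_distrib]
        exact add_lt_add (hφ n c d hcd (hlen.trans_le (min_le_left _ _)))
          (hψ n c d hcd (hlen.trans_le (min_le_right _ _)))
    _ = ε := add_halves ε

lemma exists_finset_sum_lt (hφ : FnAC φ S) {ε : ℝ} (hε : 0 < ε) :
    ∃ δ > 0, ∀ {ι : Type} (s : Finset ι) (c d : ι → ℝ),
      (∀ i ∈ s, c i ∈ S ∧ d i ∈ S ∧ c i ≤ d i) →
      (s : Set ι).PairwiseDisjoint (fun i => Icc (c i) (d i)) →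
      ∑ i ∈ s, (d i - c i) < δ → ∑ i ∈ s, |φ (d i) - φ (c i)| < ε := by
  obtain ⟨δ, hδ, hAC⟩ := hφ ε hε
  refine ⟨δ, hδ, fun {ι} s c d hcd hdisj hlen => ?_⟩
  set e := s.equivFin.symm
  have hsum : ∀ F : ι → ℝ, ∑ i ∈ s, F i = ∑ j, F (e j) := fun F => by
    rw [← s.sum_coe_sort, ← e.sum_comp]
  rw [hsum] at hlen ⊢
  refine hAC _ _ _ ⟨fun j => hcd _ (e j).2, fun j k hjk => ?_⟩ hlen
  have hne : (e j : ι) ≠ e k := fun h => hjk (e.injective (Subtype.ext h))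
  by_contra! h
  exact Set.disjoint_left.1 (hdisj (e j).2 (e k).2 hne)
    (show max (c (e j)) (c (e k)) ∈ Icc (c (e j)) (d (e j)) from
      ⟨le_max_left _ _, max_le (hcd _ (e j).2).2.2 h.1.le⟩)
    ⟨le_max_right _ _, max_le h.2.le (hcd _ (e k).2).2.2⟩

lemma exists_sum_ediam_image_le (hφ : FnAC φ S) {ε : ℝ} (hε : 0 < ε) :
    ∃ δ > 0, ∀ {ι : Type} (s : Finset ι) (C : ι → Set ℝ),
      (s : Set ι).PairwiseDisjoint C → (∀ i, (C i).OrdConnected) →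
      volume (⋃ i ∈ s, C i) < ENNReal.ofReal δ →
      ∑ i ∈ s, Metric.ediam (φ '' (S ∩ C i)) ≤ ENNReal.ofReal ε := by
  classical
  obtain ⟨δ, hδ, hAC⟩ := hφ.exists_finset_sum_lt hε
  refine ⟨δ, hδ, fun {ι} s C hdisj hC hvol => ?_⟩
  let F : ι → ℝ × ℝ → ℝ≥0∞ := fun i p =>
    if p.1 ∈ S ∩ C i ∧ p.2 ∈ S ∩ C i ∧ p.1 ≤ p.2 then ENNReal.ofReal |φ p.2 - φ p.1| else 0
  have hdiam : ∀ i, Metric.ediam (φ '' (S ∩ C i)) ≤ ⨆ p, F i p := by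
    intro i
    refine Metric.ediam_le ?_
    rintro _ ⟨x, hx, rfl⟩ _ ⟨y, hy, rfl⟩
    rw [edist_dist, Real.dist_eq]
    rcases le_total x y with hxy | hyx
    · exact le_iSup_of_le (x, y) (by rw [abs_sub_comm]; exact (if_pos ⟨hx, hy, hxy⟩).ge)
    · exact le_iSup_of_le (y, x) (if_pos ⟨hy, hx, hyx⟩).ge
  refine (Finset.sum_le_sum fun i _ => hdiam i).trans (ENNReal.finsetSum_iSup_le fun g => ?_)
  set s' := s.filter fun i => (g i).1 ∈ S ∩ C i ∧ (g i).2 ∈ S ∩ C i ∧ (g i).1 ≤ (g i).2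
  have hIcc : ∀ i ∈ s', Icc (g i).1 (g i).2 ⊆ C i := fun i hi =>
    (hC i).out (Finset.mem_filter.1 hi).2.1.2 (Finset.mem_filter.1 hi).2.2.1.2
  have hdisj' : (s' : Set ι).PairwiseDisjoint fun i => Icc (g i).1 (g i).2 :=
    fun i hi j hj hij => (hdisj (Finset.mem_filter.1 hi).1 (Finset.mem_filter.1 hj).1 hij).mono
      (hIcc i hi) (hIcc j hj)
  have hlen : ∑ i ∈ s', ((g i).2 - (g i).1) < δ :=
    (ENNReal.ofReal_lt_ofReal_iff'.1 <| (ofReal_sum_sub_le_volume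
      (fun i hi => (Finset.mem_filter.1 hi).2.2.2) hdisj' fun i hi =>
        (hIcc i hi).trans (subset_biUnion_of_mem (Finset.mem_filter.1 hi).1)).trans_lt hvol).1
  calc ∑ i ∈ s, F i (g i) = ∑ i ∈ s', ENNReal.ofReal |φ (g i).2 - φ (g i).1| :=
        (Finset.sum_filter _ _).symm
    _ = ENNReal.ofReal (∑ i ∈ s', |φ (g i).2 - φ (g i).1|) :=
        (ENNReal.ofReal_sum_of_nonneg fun _ _ => abs_nonneg _).symm
    _ ≤ ENNReal.ofReal ε := ENNReal.ofReal_le_ofReal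
        (hAC s' _ _ (fun i hi => by
          obtain ⟨hc, hd, hcd⟩ := (Finset.mem_filter.1 hi).2
          exact ⟨hc.1, hd.1, hcd⟩) hdisj' hlen).le

theorem volume_image_null (hφ : FnAC φ S) {A : Set ℝ} (hAS : A ⊆ S) (hA : volume A = 0) :
    volume (φ '' A) = 0 := by
  refine le_antisymm (ENNReal.le_of_forall_pos_le_add fun ε hε _ => ?_) bot_le
  rw [zero_add, ← ENNReal.ofReal_coe_nnreal]
  obtain ⟨δ, hδ, hsum⟩ := hφ.exists_sum_ediam_image_le (NNReal.coe_pos.2 hε)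
  obtain ⟨U, hAU, hU, hUδ⟩ :=
    Set.exists_isOpen_lt_of_lt A _ (hA ▸ ENNReal.ofReal_pos.2 hδ : volume A < ENNReal.ofReal δ)
  -- indexing the components of `U` by rational points makes the family countable
  set 𝒞 : Set (Set ℝ) := range fun q : ℚ => connectedComponentIn U q
  have hcover : φ '' A ⊆ ⋃ C ∈ 𝒞, φ '' (S ∩ C) := by
    rintro _ ⟨x, hx, rfl⟩
    obtain ⟨q, hq⟩ := Rat.denseRange_cast.exists_mem_open hU.connectedComponentIn
      ⟨x, mem_connectedComponentIn (hAU hx)⟩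
    refine mem_biUnion (mem_range_self q) ⟨x, ⟨hAS hx, ?_⟩, rfl⟩
    rw [← connectedComponentIn_eq hq]
    exact mem_connectedComponentIn (hAU hx)
  have hdisj : ∀ t : Finset 𝒞, (t : Set 𝒞).PairwiseDisjoint Subtype.val := by
    rintro t ⟨_, q, rfl⟩ - ⟨_, q', rfl⟩ - hne
    refine Set.disjoint_left.2 fun z hzq hzq' => hne (Subtype.ext ?_)
    exact (connectedComponentIn_eq hzq).trans (connectedComponentIn_eq hzq').symm
  calc volume (φ '' A) ≤ ∑' C : 𝒞, volume (φ '' (S ∩ C)) :=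
        (measure_mono hcover).trans (measure_biUnion_le _ (countable_range _) _)
    _ ≤ ∑' C : 𝒞, Metric.ediam (φ '' (S ∩ C)) :=
        ENNReal.tsum_le_tsum fun C => Real.volume_le_diam _
    _ ≤ ENNReal.ofReal ε := by
        rw [ENNReal.tsum_eq_iSup_sum]
        refine iSup_le fun t => hsum t Subtype.val (hdisj t)
          (fun ⟨_, _, rfl⟩ => isPreconnected_connectedComponentIn.ordConnected) ?_
        refine (measure_mono (iUnion₂_subset fun C _ => ?_)).trans_lt hUδ
        obtain ⟨_, q, rfl⟩ := C
        exact connectedComponentIn_subset _ _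

end FnAC

lemma LipschitzWith.fnAC {φ : ℝ → ℝ} {K : ℝ≥0} (hφ : LipschitzWith K φ) (S : Set ℝ) :
    FnAC φ S := by
  intro ε hε
  refine ⟨ε / (K + 1), by positivity, fun n c d hcd hlen => ?_⟩
  calc ∑ i, |φ (d i) - φ (c i)| ≤ ∑ i, K * (d i - c i) :=
        Finset.sum_le_sum fun i _ => by
          have := hφ.dist_le_mul (d i) (c i)
          rwa [Real.dist_eq, Real.dist_eq, abs_of_nonneg (sub_nonneg.2 (hcd.1 i).2.2)] at this
    _ = K * ∑ i, (d i - c i) := (Finset.mul_sum _ _ _).symm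
    _ ≤ K * (ε / (K + 1)) := by gcongr
    _ < ε := by
        rw [mul_div_assoc', div_lt_iff₀ (by positivity)]
        nlinarith

lemma FnACstar.fnAC {φ : ℝ → ℝ} {S : Set ℝ} {a b : ℝ} (hφ : FnACstar φ S)
    (hcont : ContinuousOn φ (Icc a b)) (hS : S ⊆ Icc a b) : FnAC φ S := by
  intro ε hε
  obtain ⟨δ, hδ, hAC⟩ := hφ ε hε
  refine ⟨δ, hδ, fun n c d hcd hlen => lt_of_le_of_lt (Finset.sum_le_sum fun i _ => ?_)
    (hAC n c d hcd hlen)⟩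
  obtain ⟨hc, hd, hcd⟩ := hcd.1 i
  exact abs_sub_le_osc hcd (hcont.mono (Icc_subset_Icc (hS hc).1 (hS hd).2))

lemma FnACGstar.fnACG {φ : ℝ → ℝ} {a b : ℝ} (hφ : FnACGstar φ a b) : FnACG φ a b := by
  obtain ⟨hcont, S, hSU, hS⟩ := hφ
  exact ⟨hcont, S, hSU, fun n => (hS n).fnAC hcont (hSU ▸ subset_iUnion S n)⟩

lemma LipschitzWith.fnACG {φ : ℝ → ℝ} {K : ℝ≥0} (hφ : LipschitzWith K φ) (a b : ℝ) :
    FnACG φ a b :=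
  ⟨hφ.continuous.continuousOn, fun _ => Icc a b, iUnion_const _, fun _ => hφ.fnAC _⟩

namespace FnACG

variable {φ ψ : ℝ → ℝ} {a b : ℝ}

lemma sub (hφ : FnACG φ a b) (hψ : FnACG ψ a b) : FnACG (fun t => φ t - ψ t) a b := by
  obtain ⟨hφc, S, hSU, hS⟩ := hφ
  obtain ⟨hψc, T, hTU, hT⟩ := hψ
  refine ⟨hφc.sub hψc, fun k => S k.unpair.1 ∩ T k.unpair.2, ?_,
    fun k => ((hS _).mono inter_subset_left).sub ((hT _).mono inter_subset_right)⟩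
  refine (iUnion_subset fun k => hSU ▸ inter_subset_left.trans (subset_iUnion _ _)).antisymm
    fun x hx => ?_
  obtain ⟨m, hm⟩ := mem_iUnion.1 (hSU.symm ▸ hx)
  obtain ⟨n, hn⟩ := mem_iUnion.1 (hTU.symm ▸ hx)
  exact mem_iUnion.2 ⟨Nat.pair m n, by simpa only [Nat.unpair_pair] using ⟨hm, hn⟩⟩

theorem volume_image_null (hφ : FnACG φ a b) {E : Set ℝ} (hE : E ⊆ Icc a b)
    (hE0 : volume E = 0) : volume (φ '' E) = 0 := by
  obtain ⟨-, S, hSU, hS⟩ := hφ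
  have hcover : φ '' E ⊆ ⋃ n, φ '' (E ∩ S n) := by
    rw [← image_iUnion, ← inter_iUnion, hSU, inter_eq_left.2 hE]
  exact measure_mono_null hcover <| measure_iUnion_null fun n =>
    (hS n).volume_image_null inter_subset_right (measure_mono_null inter_subset_left hE0)

end FnACG

lemma ContinuousOn.exists_eq_forall_Ioc_lt {ψ : ℝ → ℝ} {a b c : ℝ} (hab : a ≤ b)
    (hψ : ContinuousOn ψ (Icc a b)) (hac : ψ a ≤ c) (hcb : c < ψ b) :
    ∃ t ∈ Ico a b, ψ t = c ∧ ∀ u ∈ Ioc t b, c < ψ u := by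
  set T := Icc a b ∩ ψ ⁻¹' {c}
  have hT : IsCompact T := isCompact_Icc.of_isClosed_subset
    (hψ.preimage_isClosed_of_isClosed isClosed_Icc isClosed_singleton) inter_subset_left
  obtain ⟨t₀, ht₀, hψt₀⟩ := intermediate_value_Icc hab hψ ⟨hac, hcb.le⟩
  obtain ⟨⟨hat, htb⟩, hψt⟩ := hT.sSup_mem ⟨t₀, ht₀, hψt₀⟩
  refine ⟨sSup T, ⟨hat, htb.lt_of_ne fun h => hcb.ne' (h ▸ hψt)⟩, hψt, fun u hu => ?_⟩
  by_contra! hψu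
  obtain ⟨v, hv, hψv⟩ := intermediate_value_Icc hu.2
    (hψ.mono (Icc_subset_Icc (hat.trans hu.1.le) le_rfl)) ⟨hψu, hcb.le⟩
  have : v ≤ sSup T := le_csSup hT.bddAbove ⟨⟨hat.trans (hu.1.le.trans hv.1), hv.2⟩, hψv⟩
  linarith [hu.1, hv.1]

lemma sub_le_mul_of_volume_image_null {φ : ℝ → ℝ} {a b ε : ℝ} {E : Set ℝ} (hab : a ≤ b)
    (hφ : ContinuousOn φ (Icc a b)) (hE : volume ((fun t => φ t - ε * t) '' E) = 0)
    (hD : ∀ t ∈ Ico a b \ E, DlowR φ t ≤ 0) (hε : 0 < ε) : φ b - φ a ≤ ε * (b - a) := by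
  set ψ := fun t => φ t - ε * t
  by_contra! h
  have hψ : ContinuousOn ψ (Icc a b) := hφ.sub (continuousOn_const.mul continuousOn_id)
  -- the last point where `ψ` takes the value `c` lies in `E`
  have hsub : Ioo (ψ a) (ψ b) ⊆ ψ '' E := by
    intro c hc
    obtain ⟨t, ht, hψt, hlt⟩ := hψ.exists_eq_forall_Ioc_lt hab hc.1.le hc.2
    refine ⟨t, by_contra fun htE => ?_, hψt⟩
    have hεD : (ε : EReal) ≤ DlowR φ t := by
      refine le_dlowR_of_eventually ?_
      filter_upwards [Ioc_mem_nhdsGT (sub_pos.2 ht.2)] with s hs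
      have := hlt (t + s) ⟨by linarith [hs.1], by linarith [hs.2]⟩
      rw [le_div_iff₀ hs.1]
      simp only [ψ] at this hψt
      linarith
    exact absurd (EReal.coe_nonpos.1 (hεD.trans (hD t ⟨ht, htE⟩))) hε.not_ge
  have := measure_mono_null hsub hE
  rw [Real.volume_Ioo, ENNReal.ofReal_eq_zero] at this
  simp only [ψ] at this
  linarith

theorem FnACG.le_of_ae_dlowR_nonpos {φ : ℝ → ℝ} {a b : ℝ} (hab : a ≤ b) (hφ : FnACG φ a b)
    (hD : ∀ᵐ t ∂volume.restrict (Icc a b), DlowR φ t ≤ 0) : φ b ≤ φ a := by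
  set E := {t ∈ Icc a b | ¬DlowR φ t ≤ 0}
  have hE0 : volume E = 0 := by
    rw [ae_restrict_iff' measurableSet_Icc, ae_iff] at hD
    simpa only [Classical.not_imp] using hD
  refine le_of_forall_pos_le_add fun η hη => ?_
  set ε := η / (b - a + 1)
  have hε : 0 < ε := div_pos hη (by linarith)
  have hψ : FnACG (fun t => φ t - ε * t) a b := hφ.sub ((lipschitzWith_smul ε).fnACG a b)
  have hle := sub_le_mul_of_volume_image_null hab hφ.1
    (hψ.volume_image_null (sep_subset _ _) hE0)
    (fun t ht => not_not.1 fun h => ht.2 ⟨Ico_subset_Icc_self ht.1, h⟩) hε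
  have : ε * (b - a) ≤ η := by
    rw [div_mul_eq_mul_div, div_le_iff₀ (by linarith)]
    nlinarith
  linarith

theorem stmt19_general (f g : ℝ → ℝ)
    (hg : FnACGstar g 0 1)
    (hf : FnACG f 0 1)
    (hle : ∀ᵐ t ∂(MeasureTheory.volume.restrict (Set.Icc (0:ℝ) 1)),
      DlowR g t ≠ ⊤ ∧ DlowR g t ≠ ⊥ ∧ DlowR f t ≤ DlowR g t) :
    f 1 - f 0 ≤ g 1 - g 0 := by
  have hD : ∀ᵐ t ∂volume.restrict (Icc (0:ℝ) 1), DlowR (fun u => f u - g u) t ≤ 0 :=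
    hle.mono fun t ht => dlowR_sub_nonpos ht.1 ht.2.1 ht.2.2
  have := (hf.sub hg.fnACG).le_of_ae_dlowR_nonpos zero_le_one hD
  linarith

/-- One-dimensional core of the subdifferential determination theorem in the
ACG class: if `g` is ACG* on `[0,1]` with `D₊g = h` a.e. for an HK-integrable
`h`, `f` is ACG on `[0,1]`, and for almost all `t ∈ [0,1]` the derivative
`D₊g(t)` is finite and `D₊f(t) ≤ D₊g(t)`, then `f(1) - f(0) ≤ g(1) - g(0)`. -/
theorem stmt19 (f g h : ℝ → ℝ)
    (hg : FnACGstar g 0 1)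
    (hgh : ∀ᵐ t ∂(MeasureTheory.volume.restrict (Set.Icc (0:ℝ) 1)),
      DlowR g t = ((h t : ℝ) : EReal))
    (hhk : ∃ I : ℝ, HasHKIntegral h 0 1 I)
    (hf : FnACG f 0 1)
    (hle : ∀ᵐ t ∂(MeasureTheory.volume.restrict (Set.Icc (0:ℝ) 1)),
      DlowR g t ≠ ⊤ ∧ DlowR g t ≠ ⊥ ∧ DlowR f t ≤ DlowR g t) :
    f 1 - f 0 ≤ g 1 - g 0 :=
  stmt19_general f g hg hf hle
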